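/- Suppose a genus-g parametrized tropical curve in ℝ^d is superabundant, witnessed by nonzero data λ^{(1)},…,λ^{(g)} ∈ ℝ^d with each segment j contained in an affine hyperplane with normal Σ_i η'_{i,j} λ^{(i)}. Let π be the orthogonal projection of ℝ^d onto the span V of {λ^{(1)},…,λ^{(g)}} (so dim V ≤ g). Then the projected curve π∘φ satisfies the same superabundancy condition: each projected segment is contained in the affine subspace of V orthogonal (within V) to Σ_i η'_{i,j} λ^{(i)}, translated by π(c_j). Hence the projected curve is superabundant in V ≅ ℝ^{g'} with g' ≤ g. -/

import Mathlib

open scoped RealInnerProductSpace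

/-! Every normal `∑ i, η' i j • λ⁽ⁱ⁾` lies in `V`, and pairing a vector of `V` with `x` or with its
orthogonal projection `π x` gives the same value, since `x - π x ⊥ V`. Hence the hyperplane
conditions survive projection, and `dim V ≤ g` because `V` is spanned by `g` vectors. -/

namespace Submodule

open scoped InnerProductSpace

variable {𝕜 E : Type*} [RCLike 𝕜] [NormedAddCommGroup E] [InnerProductSpace 𝕜 E]

theorem inner_orthogonalProjectionOnto_sub_eq_of_mem_left (K : Submodule 𝕜 E)
    [K.HasOrthogonalProjection] {u : E} (hu : u ∈ K) (x y : E) :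
    ⟪u, (K.orthogonalProjectionOnto x : E) - K.orthogonalProjectionOnto y⟫_𝕜 = ⟪u, x - y⟫_𝕜 := by
  simp only [inner_sub_right, ← K.coe_inner ⟨u, hu⟩,
    inner_orthogonalProjectionOnto_eq_of_mem_left]

end Submodule

theorem project_onto_obstruction_general
    (d g t : ℕ)
    (lam : Fin g → EuclideanSpace ℝ (Fin d))
    (η' : Fin g → Fin t → ℝ)
    (S : Fin t → Set (EuclideanSpace ℝ (Fin d)))
    (c : Fin t → EuclideanSpace ℝ (Fin d))
    (V : Submodule ℝ (EuclideanSpace ℝ (Fin d)))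
    (hV : V = Submodule.span ℝ (Set.range lam))
    [V.HasOrthogonalProjection]
    (hseg : ∀ j, ∀ x ∈ S j, ⟪∑ i, η' i j • lam i, x - c j⟫ = 0) :
    Module.finrank ℝ V ≤ g ∧
      ∀ j, ∀ x ∈ S j,
        ⟪∑ i, η' i j • lam i,
          ((V.orthogonalProjectionOnto x : EuclideanSpace ℝ (Fin d)) -
            (V.orthogonalProjectionOnto (c j) : EuclideanSpace ℝ (Fin d)))⟫ = 0 := by
  subst hV
  refine ⟨(finrank_range_le_card lam).trans_eq (Fintype.card_fin g), fun j x hx => ?_⟩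
  have hnormal : ∑ i, η' i j • lam i ∈ Submodule.span ℝ (Set.range lam) :=
    (Submodule.mem_span_range_iff_exists_fun ℝ).mpr ⟨_, rfl⟩
  rw [Submodule.inner_orthogonalProjectionOnto_sub_eq_of_mem_left _ hnormal]
  exact hseg j x hx

/-- Suppose a genus-`g` tropical curve in `ℝ^d` is superabundant,
witnessed by data `λ⁽¹⁾, …, λ⁽ᵍ⁾` (not all zero) such that each segment `j` (a set of
points `S j`) lies in the affine hyperplane through `c j` with normal `∑ i, η' i j • λ⁽ⁱ⁾`.
Let `π` be the orthogonal projection onto `V = span{λ⁽¹⁾, …, λ⁽ᵍ⁾}`.  Then `dim V ≤ g`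
and each projected segment lies in the affine subspace of `V` orthogonal (within `V`) to
`∑ i, η' i j • λ⁽ⁱ⁾`, translated by `π (c j)`; hence the projected curve is superabundant
in `V ≅ ℝ^{g'}` with `g' ≤ g`. -/
theorem project_onto_obstruction
    (d g t : ℕ)
    (lam : Fin g → EuclideanSpace ℝ (Fin d))
    (hlam : lam ≠ 0)
    (η' : Fin g → Fin t → ℝ)
    (S : Fin t → Set (EuclideanSpace ℝ (Fin d)))
    (c : Fin t → EuclideanSpace ℝ (Fin d))
    (V : Submodule ℝ (EuclideanSpace ℝ (Fin d)))
    (hV : V = Submodule.span ℝ (Set.range lam))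
    [V.HasOrthogonalProjection]
    (hseg : ∀ j, ∀ x ∈ S j, ⟪∑ i, η' i j • lam i, x - c j⟫ = 0) :
    Module.finrank ℝ V ≤ g ∧
      ∀ j, ∀ x ∈ S j,
        ⟪∑ i, η' i j • lam i,
          ((V.orthogonalProjectionOnto x : EuclideanSpace ℝ (Fin d)) -
            (V.orthogonalProjectionOnto (c j) : EuclideanSpace ℝ (Fin d)))⟫ = 0 :=
  project_onto_obstruction_general d g t lam η' S c V hV hseg
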